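/- arXiv:2209.02220 — 2 statements merged into one kernel-verified Lean document; each statement's English description precedes it below -/
import Mathlib

section
/- For nonnegative integers n, k and real φ, the noncentral Stirling numbers satisfy S(n, k, φ+1) = (k+1)·S(n, k+1, φ) + S(n, k, φ). -/
open Finset

/-- Noncentral Stirling numbers of the second kind. -/
noncomputable def nS (n k : ℕ) (φ : ℝ) : ℝ :=
  (1 / (Nat.factorial k : ℝ)) *
    ∑ i ∈ Finset.range (k + 1),
      (Nat.choose k i : ℝ) * (-1) ^ (k - i) * ((i : ℝ) + φ) ^ n

/-!
`k! · S(n, k, φ)` is the `k`-th forward difference `Δᵏ xⁿ` at `x = φ`. The recurrence is then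
`Δᵏ⁺¹ f (φ) = Δᵏ f (φ + 1) - Δᵏ f (φ)` divided by `k!`.
-/

lemma nS_eq_fwdDiff_iter_div_factorial (n k : ℕ) (φ : ℝ) :
    nS n k φ = (fwdDiff 1)^[k] (fun x : ℝ ↦ x ^ n) φ / k.factorial := by
  rw [nS, fwdDiff_iter_eq_sum_shift, one_div_mul_eq_div]
  congr 1
  refine sum_congr rfl fun i _ ↦ ?_
  simp only [zsmul_eq_mul, nsmul_eq_mul, mul_one]
  push_cast
  ring

theorem stirling_shift_noncentrality (n k : ℕ) (φ : ℝ) :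
    nS n k (φ + 1) = ((k : ℝ) + 1) * nS n (k + 1) φ + nS n k φ := by
  simp only [nS_eq_fwdDiff_iter_div_factorial, Function.iterate_succ_apply', fwdDiff,
    Nat.factorial_succ]
  push_cast
  field_simp
  ring
end

section
/- For integers 0 ≤ k ≤ min(n, m), the extended occupancy mass function Occ(k|n, m, θ) = C(m, k)·∑_{i=0}^{k} C(k, i)·(−1)^{k−i}·(1 − θ(m−i)/m)^n equals (θ^n/m^n)·(m)_k·S(n, k, m(1−θ)/θ), where (m)_k is the falling factorial and S is the noncentral Stirling number of the second kind (assume 0 < θ ≤ 1). -/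
open Finset

/-- Extended occupancy mass function. -/
noncomputable def Occ (k n m : ℕ) (θ : ℝ) : ℝ :=
  (Nat.choose m k : ℝ) *
    ∑ i ∈ Finset.range (k + 1),
      (Nat.choose k i : ℝ) * (-1) ^ (k - i) * (1 - θ * ((m : ℝ) - i) / m) ^ n

/-- Falling factorial `(t)_k = t (t-1) ⋯ (t-k+1)`. -/
noncomputable def ffall (t : ℝ) (k : ℕ) : ℝ := ∏ i ∈ Finset.range k, (t - (i : ℝ))

/-!
Pulling `θ / m` out of each base, `1 - θ (m - i) / m = (θ / m) (i + m (1 - θ) / θ)`, turns the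
alternating sum in `Occ` into `(θ / m)ⁿ` times the one defining `k! · S(n, k, m (1 - θ) / θ)`, and
`C(m, k) · k! = (m)ₖ`.
-/

lemma ffall_eq_descPochhammer_eval (t : ℝ) (k : ℕ) : ffall t k = (descPochhammer ℝ k).eval t :=
  (descPochhammer_eval_eq_prod_range k t).symm

lemma ffall_natCast_eq_choose_mul_factorial (m k : ℕ) :
    ffall (m : ℝ) k = (m.choose k : ℝ) * (k.factorial : ℝ) := by
  rw [ffall_eq_descPochhammer_eval, descPochhammer_eval_eq_descFactorial,
    Nat.descFactorial_eq_factorial_mul_choose, Nat.cast_mul, mul_comm]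

lemma factorial_mul_nS (n k : ℕ) (φ : ℝ) :
    (k.factorial : ℝ) * nS n k φ =
      ∑ i ∈ range (k + 1), (k.choose i : ℝ) * (-1) ^ (k - i) * ((i : ℝ) + φ) ^ n := by
  rw [nS, ← mul_assoc, mul_one_div_cancel (by positivity), one_mul]

lemma one_sub_mul_sub_div_eq {θ M : ℝ} (hθ : θ ≠ 0) (hM : M ≠ 0) (x : ℝ) :
    1 - θ * (M - x) / M = θ / M * (x + M * (1 - θ) / θ) := by
  field_simp
  ring

lemma Occ_eq_pow_mul_sum {m : ℕ} (hm : m ≠ 0) {θ : ℝ} (hθ : θ ≠ 0) (k n : ℕ) :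
    Occ k n m θ = (m.choose k : ℝ) * (θ / m) ^ n *
      ∑ i ∈ range (k + 1), (k.choose i : ℝ) * (-1) ^ (k - i) * ((i : ℝ) + m * (1 - θ) / θ) ^ n := by
  simp only [Occ, one_sub_mul_sub_div_eq hθ (Nat.cast_ne_zero.mpr hm), mul_pow, mul_sum,
    mul_assoc]
  refine sum_congr rfl fun i _ => ?_
  ring

theorem occupancy_stirling_form_general (n m k : ℕ) (hm : 0 < m) (θ : ℝ)
    (hθ0 : 0 < θ) :
    Occ k n m θ =
      θ ^ n / (m : ℝ) ^ n * ffall (m : ℝ) k * nS n k ((m : ℝ) * (1 - θ) / θ) := by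
  rw [Occ_eq_pow_mul_sum hm.ne' hθ0.ne', ffall_natCast_eq_choose_mul_factorial,
    ← factorial_mul_nS, div_pow]
  ring

theorem occupancy_stirling_form (n m k : ℕ) (hm : 0 < m) (θ : ℝ)
    (hθ0 : 0 < θ) (hθ1 : θ ≤ 1) (hk : k ≤ min n m) :
    Occ k n m θ =
      θ ^ n / (m : ℝ) ^ n * ffall (m : ℝ) k * nS n k ((m : ℝ) * (1 - θ) / θ) :=
  occupancy_stirling_form_general n m k hm θ hθ0
end
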